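/- arXiv:hep-th/9304156 — 3 statements merged into one kernel-verified Lean document; each statement's English description precedes it below -/
import Mathlib

section
/- Let u : ℝ² → GLₙ(ℂ) have continuously differentiable entries, let X₊, X₋ be fixed n×n complex matrices, and set h = u². Then the gauge transformation by u⁻¹ of the connection components A₊ = u⁻¹ * ∂₊u + u * X₊ * u⁻¹, A₋ = −(∂₋u) * u⁻¹ + u⁻¹ * X₋ * u, namely A_± ↦ u⁻¹ * A_± * u − (∂_±(u⁻¹)) * u, yields exactly the components A₊' = h⁻¹ * ∂₊h + X₊ and A₋' = h⁻¹ * X₋ * h. -/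
/-!
Differentiating `u⁻¹ * u = 1` and `u * u` entrywise gives `∂(u⁻¹) = -u⁻¹ (∂u) u⁻¹` and
`∂(u²) = (∂u) u + u (∂u)`. Substituting these, both components reduce to identities in a
noncommutative ring that only use `u⁻¹ * u = 1`.
-/

open Matrix

noncomputable def dplus {n : ℕ} (h : ℝ × ℝ → Matrix (Fin n) (Fin n) ℂ) :
    ℝ × ℝ → Matrix (Fin n) (Fin n) ℂ :=
  fun p => Matrix.of fun i j => deriv (fun s => h (s, p.2) i j) p.1

noncomputable def dminus {n : ℕ} (h : ℝ × ℝ → Matrix (Fin n) (Fin n) ℂ) :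
    ℝ × ℝ → Matrix (Fin n) (Fin n) ℂ :=
  fun p => Matrix.of fun i j => deriv (fun s => h (p.1, s) i j) p.2

section
variable {E 𝕂 : Type*} [NormedAddCommGroup E] [NormedSpace ℝ E]
  [NontriviallyNormedField 𝕂] [NormedAlgebra ℝ 𝕂]
  {m : Type*} [Fintype m] [DecidableEq m]

theorem Matrix.differentiableAt_det {A : E → Matrix m m 𝕂} {x : E}
    (hA : ∀ i j, DifferentiableAt ℝ (fun y => A y i j) x) :
    DifferentiableAt ℝ (fun y => (A y).det) x := by
  simp only [det_apply, Units.smul_def, zsmul_eq_mul]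
  fun_prop

theorem Matrix.differentiableAt_inv_apply {A : E → Matrix m m 𝕂} {x : E}
    (hA : ∀ i j, DifferentiableAt ℝ (fun y => A y i j) x) (hx : IsUnit (A x)) (i j : m) :
    DifferentiableAt ℝ (fun y => (A y)⁻¹ i j) x := by
  have hdet : (A x).det ≠ 0 := ((isUnit_iff_isUnit_det _).1 hx).ne_zero
  simp only [inv_def, smul_apply, Ring.inverse_eq_inv, smul_eq_mul, adjugate_apply]
  refine ((differentiableAt_det hA).inv hdet).mul (differentiableAt_det fun k l => ?_)
  by_cases hk : k = j
  · simp [hk, updateRow_apply]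
  · simpa [hk, updateRow_apply] using hA k l

end

section
variable {𝕂 : Type*} [NontriviallyNormedField 𝕂] [NormedAlgebra ℝ 𝕂] {l m n : Type*}

noncomputable def entrywiseDeriv (A : ℝ → Matrix m n 𝕂) (t : ℝ) : Matrix m n 𝕂 :=
  of fun i j => deriv (fun s => A s i j) t

theorem entrywiseDeriv_const (M : Matrix m n 𝕂) (t : ℝ) :
    entrywiseDeriv (fun _ => M) t = 0 := by
  ext i j
  simp [entrywiseDeriv]

theorem entrywiseDeriv_mul [Fintype m] {A : ℝ → Matrix l m 𝕂} {B : ℝ → Matrix m n 𝕂} {t : ℝ}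
    (hA : ∀ i j, DifferentiableAt ℝ (fun s => A s i j) t)
    (hB : ∀ i j, DifferentiableAt ℝ (fun s => B s i j) t) :
    entrywiseDeriv (fun s => A s * B s) t
      = entrywiseDeriv A t * B t + A t * entrywiseDeriv B t := by
  ext i j
  have hsum := HasDerivAt.fun_sum (u := Finset.univ) fun k _ =>
    (hA i k).hasDerivAt.mul (hB k j).hasDerivAt
  simp only [entrywiseDeriv, mul_apply, Matrix.add_apply, of_apply, ← Finset.sum_add_distrib]
  exact hsum.deriv

theorem entrywiseDeriv_inv [Fintype n] [DecidableEq n] {A : ℝ → Matrix n n 𝕂} {t : ℝ}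
    (hA : ∀ s i j, DifferentiableAt ℝ (fun r => A r i j) s) (hu : ∀ s, IsUnit (A s)) :
    entrywiseDeriv (fun s => (A s)⁻¹) t = -((A t)⁻¹ * entrywiseDeriv A t * (A t)⁻¹) := by
  have hdet : ∀ s, IsUnit (A s).det := fun s => (isUnit_iff_isUnit_det _).1 (hu s)
  have hprod : entrywiseDeriv (fun s => (A s)⁻¹ * A s) t = 0 := by
    simp only [nonsing_inv_mul _ (hdet _), entrywiseDeriv_const]
  rw [entrywiseDeriv_mul (differentiableAt_inv_apply (hA t) (hu t)) (hA t)] at hprod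
  calc entrywiseDeriv (fun s => (A s)⁻¹) t
      = (entrywiseDeriv (fun s => (A s)⁻¹) t * A t) * (A t)⁻¹ := by
        rw [mul_assoc, mul_nonsing_inv _ (hdet t), mul_one]
    _ = -((A t)⁻¹ * entrywiseDeriv A t * (A t)⁻¹) := by
        rw [eq_neg_of_add_eq_zero_left hprod, neg_mul]
end

section
variable {R : Type*} [Ring R] {u v : R}

theorem gauge_plus_identity (hvu : v * u = 1) (D X : R) :
    v * (v * D + u * X * v) * u - -(v * D * v) * u = v * v * (D * u + u * D) + X := by
  have hcancel : ∀ Z, v * (u * Z) = Z := fun Z => by rw [← mul_assoc, hvu, one_mul]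
  simp only [mul_add, add_mul, mul_assoc, hcancel, hvu, mul_one, neg_mul, sub_neg_eq_add]
  abel

theorem gauge_minus_identity (hvu : v * u = 1) (D X : R) :
    v * (-(D * v) + v * X * u) * u - -(v * D * v) * u = v * v * X * (u * u) := by
  simp only [mul_add, add_mul, mul_neg, neg_mul, mul_assoc, hvu, mul_one]
  abel

end

-- `dplus u p` and `dminus u p` are definitionally `entrywiseDeriv` of the slices
-- `s ↦ u (s, p.2)` and `s ↦ u (p.1, s)`.
section
variable {n : ℕ} {u v : ℝ × ℝ → Matrix (Fin n) (Fin n) ℂ}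

theorem dplus_mul (hu : ∀ i j, Differentiable ℝ fun q => u q i j)
    (hv : ∀ i j, Differentiable ℝ fun q => v q i j) (p : ℝ × ℝ) :
    dplus (fun q => u q * v q) p = dplus u p * v p + u p * dplus v p :=
  entrywiseDeriv_mul (A := fun s => u (s, p.2)) (B := fun s => v (s, p.2))
    (fun i j => Differentiable.comp (hu i j) (differentiable_id.prodMk (differentiable_const _)) _)
    (fun i j => Differentiable.comp (hv i j) (differentiable_id.prodMk (differentiable_const _)) _)

theorem dplus_inv (hu : ∀ i j, Differentiable ℝ fun q => u q i j)
    (hinv : ∀ q, IsUnit (u q)) (p : ℝ × ℝ) :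
    dplus (fun q => (u q)⁻¹) p = -((u p)⁻¹ * dplus u p * (u p)⁻¹) :=
  entrywiseDeriv_inv (A := fun s => u (s, p.2))
    (fun s i j =>
      Differentiable.comp (hu i j) (differentiable_id.prodMk (differentiable_const _)) s)
    fun _ => hinv _

theorem dminus_inv (hu : ∀ i j, Differentiable ℝ fun q => u q i j)
    (hinv : ∀ q, IsUnit (u q)) (p : ℝ × ℝ) :
    dminus (fun q => (u q)⁻¹) p = -((u p)⁻¹ * dminus u p * (u p)⁻¹) :=
  entrywiseDeriv_inv (A := fun s => u (p.1, s))
    (fun s i j =>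
      Differentiable.comp (hu i j) ((differentiable_const _).prodMk differentiable_id) s)
    fun _ => hinv _

end

theorem statement3_general {n : ℕ}
    (u : ℝ × ℝ → Matrix (Fin n) (Fin n) ℂ)
    (Xp Xm : Matrix (Fin n) (Fin n) ℂ)
    (hC1 : ∀ i j, ContDiff ℝ 1 fun p : ℝ × ℝ => u p i j)
    (hinv : ∀ p, IsUnit (u p))
    (h : ℝ × ℝ → Matrix (Fin n) (Fin n) ℂ)
    (hdef : ∀ p, h p = u p * u p) :
    ∀ p : ℝ × ℝ,
      ((u p)⁻¹ * ((u p)⁻¹ * dplus u p + u p * Xp * (u p)⁻¹) * u p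
          - dplus (fun q => (u q)⁻¹) p * u p = (h p)⁻¹ * dplus h p + Xp)
      ∧ ((u p)⁻¹ * (-(dminus u p * (u p)⁻¹) + (u p)⁻¹ * Xm * u p) * u p
          - dminus (fun q => (u q)⁻¹) p * u p = (h p)⁻¹ * Xm * h p) := by
  intro p
  have hu : ∀ i j, Differentiable ℝ fun q => u q i j :=
    fun i j => (hC1 i j).differentiable one_ne_zero
  have hdet := (isUnit_iff_isUnit_det _).1 (hinv p)
  obtain rfl : h = fun q => u q * u q := funext hdef
  rw [dplus_inv hu hinv, dminus_inv hu hinv, dplus_mul hu hu, Matrix.mul_inv_rev]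
  exact ⟨gauge_plus_identity (nonsing_inv_mul _ hdet) _ _,
    gauge_minus_identity (nonsing_inv_mul _ hdet) _ _⟩

/-- Gauge transforming the connection `A₊ = u⁻¹∂₊u + uX₊u⁻¹`, `A₋ = −(∂₋u)u⁻¹ + u⁻¹X₋u`
by `u⁻¹` (i.e. `A_± ↦ u⁻¹ A_± u − (∂_±(u⁻¹)) u`) yields `A₊' = h⁻¹∂₊h + X₊`,
`A₋' = h⁻¹X₋h`, where `h = u²`. -/
theorem statement3 {n : ℕ} (hn : 0 < n)
    (u : ℝ × ℝ → Matrix (Fin n) (Fin n) ℂ)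
    (Xp Xm : Matrix (Fin n) (Fin n) ℂ)
    (hC1 : ∀ i j, ContDiff ℝ 1 fun p : ℝ × ℝ => u p i j)
    (hinv : ∀ p, IsUnit (u p))
    (h : ℝ × ℝ → Matrix (Fin n) (Fin n) ℂ)
    (hdef : ∀ p, h p = u p * u p) :
    ∀ p : ℝ × ℝ,
      ((u p)⁻¹ * ((u p)⁻¹ * dplus u p + u p * Xp * (u p)⁻¹) * u p
          - dplus (fun q => (u q)⁻¹) p * u p = (h p)⁻¹ * dplus h p + Xp)
      ∧ ((u p)⁻¹ * (-(dminus u p * (u p)⁻¹) + (u p)⁻¹ * Xm * u p) * u p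
          - dminus (fun q => (u q)⁻¹) p * u p = (h p)⁻¹ * Xm * h p) :=
  statement3_general u Xp Xm hC1 hinv h hdef
end

section
/- Let h : ℝ² → GLₙ(ℂ) have twice continuously differentiable entries and let D be a fixed n×n complex matrix with D * h(x) = h(x) * D for all x ∈ ℝ². Then Tr(D * ∂₊(h⁻¹ * ∂₋h)) = Tr(D * ∂₋(h⁻¹ * ∂₊h)); in particular the improvement tensor C_{μν} built from Tr(D * ∂_μ(h⁻¹∂_νh)) is symmetric. -/
/-! Write `E = h⁻¹`, `A = ∂₊h`, `B = ∂₋h` and `S = ∂₊∂₋h = ∂₋∂₊h` (Schwarz). Differentiating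
`E` gives `∂₊(h⁻¹∂₋h) = -EAEB + ES` and `∂₋(h⁻¹∂₊h) = -EBEA + ES`, so the claim reduces to
`Tr(D EAEB) = Tr(D EBEA)`. Since `D` commutes with `h`, it commutes with `E` and, after
differentiating, with `B`; cycling `EB` to the front of the trace and past `D` gives the
identity. -/

open Matrix

-- Any norm inducing the product topology would do; this one makes matrices a normed algebra.
attribute [local instance] Matrix.linftyOpNormedAddCommGroup Matrix.linftyOpNormedSpace
  Matrix.linftyOpNormedRing Matrix.linftyOpNormedAlgebra

section Slices

variable {F : Type*} [NormedAddCommGroup F] [NormedSpace ℝ F]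

theorem HasFDerivAt.hasDerivAt_slice_fst {f : ℝ × ℝ → F} {f' : ℝ × ℝ →L[ℝ] F} {q : ℝ × ℝ}
    (hf : HasFDerivAt f f' q) : HasDerivAt (fun s => f (s, q.2)) (f' (1, 0)) q.1 :=
  hf.comp_hasDerivAt q.1 ((hasDerivAt_id q.1).prodMk (hasDerivAt_const q.1 q.2))

theorem HasFDerivAt.hasDerivAt_slice_snd {f : ℝ × ℝ → F} {f' : ℝ × ℝ →L[ℝ] F} {q : ℝ × ℝ}
    (hf : HasFDerivAt f f' q) : HasDerivAt (fun t => f (q.1, t)) (f' (0, 1)) q.2 :=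
  hf.comp_hasDerivAt q.2 ((hasDerivAt_const q.2 q.1).prodMk (hasDerivAt_id q.2))

theorem ContDiff.hasDerivAt_deriv_slice_snd {f : ℝ × ℝ → F} (hf : ContDiff ℝ 2 f) (q : ℝ × ℝ) :
    HasDerivAt (fun s => deriv (fun t => f (s, t)) q.2)
      (fderiv ℝ (fderiv ℝ f) q (1, 0) (0, 1)) q.1 := by
  have hf' : Differentiable ℝ (fderiv ℝ f) :=
    (hf.fderiv_right (m := 1) (by norm_num)).differentiable one_ne_zero
  have hslice : (fun s => deriv (fun t => f (s, t)) q.2) = fun s => fderiv ℝ f (s, q.2) (0, 1) :=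
    funext fun s =>
      (hf.differentiable (by norm_num) (s, q.2)).hasFDerivAt.hasDerivAt_slice_snd.deriv
  rw [hslice]
  exact ((ContinuousLinearMap.apply ℝ F ((0 : ℝ), (1 : ℝ))).hasFDerivAt.comp q
    (hf' q).hasFDerivAt).hasDerivAt_slice_fst

theorem ContDiff.hasDerivAt_deriv_slice_fst {f : ℝ × ℝ → F} (hf : ContDiff ℝ 2 f) (q : ℝ × ℝ) :
    HasDerivAt (fun t => deriv (fun s => f (s, t)) q.1)
      (fderiv ℝ (fderiv ℝ f) q (1, 0) (0, 1)) q.2 := by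
  have hf' : Differentiable ℝ (fderiv ℝ f) :=
    (hf.fderiv_right (m := 1) (by norm_num)).differentiable one_ne_zero
  have hslice : (fun t => deriv (fun s => f (s, t)) q.1) = fun t => fderiv ℝ f (q.1, t) (1, 0) :=
    funext fun t =>
      (hf.differentiable (by norm_num) (q.1, t)).hasFDerivAt.hasDerivAt_slice_fst.deriv
  -- symmetry of the second derivative (Schwarz)
  rw [hslice, ← hf.contDiffAt.isSymmSndFDerivAt (by simp) (0, 1) (1, 0)]
  exact ((ContinuousLinearMap.apply ℝ F ((1 : ℝ), (0 : ℝ))).hasFDerivAt.comp q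
    (hf' q).hasFDerivAt).hasDerivAt_slice_snd

end Slices

theorem Matrix.hasDerivAt_iff {m n E : Type*} [Fintype m] [Fintype n] [NormedAddCommGroup E]
    [NormedSpace ℝ E] {M : ℝ → Matrix m n E} {M' : Matrix m n E} {x : ℝ} :
    HasDerivAt M M' x ↔ ∀ i j, HasDerivAt (fun s => M s i j) (M' i j) x :=
  hasDerivAt_pi.trans (forall_congr' fun _ => hasDerivAt_pi)

theorem Matrix.hasDerivAt_inv {𝕜 n : Type*} [RCLike 𝕜] [Fintype n] [DecidableEq n]
    {M : ℝ → Matrix n n 𝕜} {M' : Matrix n n 𝕜} {x : ℝ}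
    (hM : HasDerivAt M M' x) (hx : IsUnit (M x)) :
    HasDerivAt (fun s => (M s)⁻¹) (-((M x)⁻¹ * M' * (M x)⁻¹)) x := by
  have : ProperSpace (Matrix n n 𝕜) := FiniteDimensional.proper_rclike 𝕜 _
  obtain ⟨u, hu⟩ := hx
  have := (hu ▸ hasFDerivAt_ringInverse (𝕜 := ℝ) u).comp_hasDerivAt x hM
  have hinv : (fun s => (M s)⁻¹) = Ring.inverse ∘ M :=
    funext fun s => Matrix.nonsing_inv_eq_ringInverse (M s)
  rw [hinv, ← hu]
  rwa [_root_.neg_apply, ContinuousLinearMap.mulLeftRight_apply, Matrix.coe_units_inv] at this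

theorem HasDerivAt.commute_of_forall {𝔸 : Type*} [NormedRing 𝔸] [NormedAlgebra ℝ 𝔸]
    {M : ℝ → 𝔸} {M' a : 𝔸} {x : ℝ} (hM : HasDerivAt M M' x) (ha : ∀ s, Commute a (M s)) :
    Commute a M' := by
  have hleft : HasDerivAt (fun s => a * M s) (a * M') x := hM.const_mul a
  have hright : HasDerivAt (fun s => a * M s) (M' * a) x := by
    simpa only [(ha _).eq] using hM.mul_const a
  exact hleft.unique hright

theorem Matrix.trace_mul_mul_mul_mul_comm {n R : Type*} [Fintype n] [CommRing R]
    {D E A B : Matrix n n R} (hE : Commute D E) (hB : Commute D B) :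
    trace (D * (E * A * E * B)) = trace (D * (E * B * E * A)) := by
  have hEB : Commute D (E * B) := hE.mul_right hB
  calc trace (D * (E * A * E * B)) = trace (D * E * A * (E * B)) := by simp only [mul_assoc]
    _ = trace (E * B * D * (E * A)) := by rw [trace_mul_comm, ← mul_assoc]; simp only [mul_assoc]
    _ = trace (D * (E * B * E * A)) := by rw [← hEB.eq]; simp only [mul_assoc]

section LightCone

variable {n : ℕ} {h : ℝ × ℝ → Matrix (Fin n) (Fin n) ℂ}

theorem dplus_eq_of_hasDerivAt {p : ℝ × ℝ} {H : Matrix (Fin n) (Fin n) ℂ}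
    (hH : HasDerivAt (fun s => h (s, p.2)) H p.1) : dplus h p = H :=
  Matrix.ext fun i j => (Matrix.hasDerivAt_iff.mp hH i j).deriv

theorem dminus_eq_of_hasDerivAt {p : ℝ × ℝ} {H : Matrix (Fin n) (Fin n) ℂ}
    (hH : HasDerivAt (fun t => h (p.1, t)) H p.2) : dminus h p = H :=
  Matrix.ext fun i j => (Matrix.hasDerivAt_iff.mp hH i j).deriv

theorem hasDerivAt_dplus {p : ℝ × ℝ} (hh : ∀ i j, DifferentiableAt ℝ (fun q => h q i j) p) :
    HasDerivAt (fun s => h (s, p.2)) (dplus h p) p.1 :=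
  Matrix.hasDerivAt_iff.mpr fun i j =>
    (hh i j).hasFDerivAt.hasDerivAt_slice_fst.differentiableAt.hasDerivAt

theorem hasDerivAt_dminus {p : ℝ × ℝ} (hh : ∀ i j, DifferentiableAt ℝ (fun q => h q i j) p) :
    HasDerivAt (fun t => h (p.1, t)) (dminus h p) p.2 :=
  Matrix.hasDerivAt_iff.mpr fun i j =>
    (hh i j).hasFDerivAt.hasDerivAt_slice_snd.differentiableAt.hasDerivAt

theorem exists_hasDerivAt_dminus_and_dplus (hh : ∀ i j, ContDiff ℝ 2 fun q => h q i j)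
    (p : ℝ × ℝ) : ∃ S, HasDerivAt (fun s => dminus h (s, p.2)) S p.1 ∧
      HasDerivAt (fun t => dplus h (p.1, t)) S p.2 :=
  ⟨Matrix.of fun i j => fderiv ℝ (fderiv ℝ fun q => h q i j) p (1, 0) (0, 1),
    Matrix.hasDerivAt_iff.mpr fun i j => (hh i j).hasDerivAt_deriv_slice_snd p,
    Matrix.hasDerivAt_iff.mpr fun i j => (hh i j).hasDerivAt_deriv_slice_fst p⟩

end LightCone

theorem statement6_general {n : ℕ}
    (h : ℝ × ℝ → Matrix (Fin n) (Fin n) ℂ)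
    (D : Matrix (Fin n) (Fin n) ℂ)
    (hC2 : ∀ i j, ContDiff ℝ 2 fun p : ℝ × ℝ => h p i j)
    (hinv : ∀ p, IsUnit (h p))
    (hcomm : ∀ p, D * h p = h p * D) :
    ∀ p : ℝ × ℝ,
      Matrix.trace (D * dplus (fun q => (h q)⁻¹ * dminus h q) p)
        = Matrix.trace (D * dminus (fun q => (h q)⁻¹ * dplus h q) p) := by
  intro p
  have hdiff i j : DifferentiableAt ℝ (fun q => h q i j) p :=
    (hC2 i j).differentiable (by norm_num) p
  obtain ⟨S, hS_fst, hS_snd⟩ := exists_hasDerivAt_dminus_and_dplus hC2 p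
  have hplus : dplus (fun q => (h q)⁻¹ * dminus h q) p
      = -((h p)⁻¹ * dplus h p * (h p)⁻¹) * dminus h p + (h p)⁻¹ * S :=
    dplus_eq_of_hasDerivAt ((Matrix.hasDerivAt_inv (hasDerivAt_dplus hdiff) (hinv p)).mul hS_fst)
  have hminus : dminus (fun q => (h q)⁻¹ * dplus h q) p
      = -((h p)⁻¹ * dminus h p * (h p)⁻¹) * dplus h p + (h p)⁻¹ * S :=
    dminus_eq_of_hasDerivAt
      ((Matrix.hasDerivAt_inv (hasDerivAt_dminus hdiff) (hinv p)).mul hS_snd)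
  have hDE : Commute D (h p)⁻¹ := by
    obtain ⟨u, hu⟩ := hinv p
    rw [← hu, ← Matrix.coe_units_inv]
    exact Commute.units_inv_right (hu ▸ hcomm p)
  have hDB : Commute D (dminus h p) :=
    (hasDerivAt_dminus hdiff).commute_of_forall fun t => hcomm (p.1, t)
  rw [hplus, hminus]
  simp only [mul_add, trace_add, neg_mul, mul_neg, trace_neg,
    Matrix.trace_mul_mul_mul_mul_comm hDE hDB]

/-- If `D` commutes with `h` everywhere then
`Tr(D ∂₊(h⁻¹∂₋h)) = Tr(D ∂₋(h⁻¹∂₊h))`: the improvement tensor is symmetric. -/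
theorem statement6 {n : ℕ} (hn : 0 < n)
    (h : ℝ × ℝ → Matrix (Fin n) (Fin n) ℂ)
    (D : Matrix (Fin n) (Fin n) ℂ)
    (hC2 : ∀ i j, ContDiff ℝ 2 fun p : ℝ × ℝ => h p i j)
    (hinv : ∀ p, IsUnit (h p))
    (hcomm : ∀ p, D * h p = h p * D) :
    ∀ p : ℝ × ℝ,
      Matrix.trace (D * dplus (fun q => (h q)⁻¹ * dminus h q) p)
        = Matrix.trace (D * dminus (fun q => (h q)⁻¹ * dplus h q) p) :=
  statement6_general h D hC2 hinv hcomm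
end

section
/- Let h : ℝ² → GLₙ(ℂ) have three times continuously differentiable entries, let X₊, X₋, D be fixed n×n complex matrices with [D, X₊] = X₊, and suppose h satisfies the Toda equation ∂₋(h⁻¹ * ∂₊h) = [X₊, h⁻¹ * X₋ * h]. Then the quantity Θ₊₊ := Tr((h⁻¹ * ∂₊h)²) − 2 Tr(D * ∂₊(h⁻¹ * ∂₊h)) is chiral: ∂₋Θ₊₊ = 0. -/
/-!
With `A = h⁻¹ ∂₊h` and `M = h⁻¹ X₋ h`, the Toda equation reads `∂₋A = [X₊, M]`,
and differentiating the conjugation gives `∂₊M = [M, A]`. Since mixed partials commute,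
`∂₋Θ₊₊ = 2 Tr(A [X₊, M]) - 2 Tr(D [X₊, [M, A]])`, and cyclicity of the trace gives
`Tr(D [X₊, Y]) = Tr([D, X₊] Y) = Tr(X₊ Y)`, which makes the two traces equal.
-/

open Matrix
-- The choice of norm is immaterial; the operator norm makes `Matrix m m 𝕜` a normed algebra.
open scoped Matrix.Norms.Operator

theorem trace_mul_commutator {m R : Type*} [Fintype m] [CommRing R] (D X Y : Matrix m m R) :
    trace (D * (X * Y - Y * X)) = trace ((D * X - X * D) * Y) := by
  simp only [mul_sub, sub_mul, trace_sub, ← mul_assoc]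
  rw [trace_mul_cycle D Y X]

-- The value of `∂₋Θ₊₊` once `∂₋A = [X₊, M]` and `∂₊M = [M, A]` are substituted.
theorem trace_toda_identity {m R : Type*} [Fintype m] [CommRing R] (A M X D : Matrix m m R)
    (hD : D * X - X * D = X) :
    trace ((X * M - M * X) * A + A * (X * M - M * X))
      - 2 * trace (D * (X * (M * A - A * M) - (M * A - A * M) * X)) = 0 := by
  rw [trace_mul_commutator, hD]
  simp only [mul_sub, sub_mul, trace_sub, trace_add, ← mul_assoc]
  rw [trace_mul_cycle A M X, ← trace_mul_cycle X M A, trace_mul_cycle X A M]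
  ring

section PartialDerivative

variable {E : Type*} [NormedAddCommGroup E] [NormedSpace ℝ E] {F : ℝ × ℝ → E}
  {F' : ℝ × ℝ →L[ℝ] E} {q : ℝ × ℝ}

theorem HasFDerivAt.hasDerivAt_fst_slice (hF : HasFDerivAt F F' q) :
    HasDerivAt (fun s => F (s, q.2)) (F' (1, 0)) q.1 :=
  hF.comp_hasDerivAt_of_eq q.1 ((hasDerivAt_id q.1).prodMk (hasDerivAt_const q.1 q.2)) rfl

theorem HasFDerivAt.hasDerivAt_snd_slice (hF : HasFDerivAt F F' q) :
    HasDerivAt (fun s => F (q.1, s)) (F' (0, 1)) q.2 :=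
  hF.comp_hasDerivAt_of_eq q.2 ((hasDerivAt_const q.2 q.1).prodMk (hasDerivAt_id q.2)) rfl

end PartialDerivative

section MatrixCalculus

variable {m 𝕜 : Type*} [Fintype m] [RCLike 𝕜]

theorem HasDerivAt.matrix_apply {f : ℝ → Matrix m m 𝕜} {f' : Matrix m m 𝕜} {x : ℝ}
    (hf : HasDerivAt f f' x) (i j : m) :
    HasDerivAt (fun s => f s i j) (f' i j) x :=
  (entryLinearMap ℝ 𝕜 i j).toContinuousLinearMap.hasFDerivAt.comp_hasDerivAt x hf

theorem HasDerivAt.trace {f : ℝ → Matrix m m 𝕜} {f' : Matrix m m 𝕜} {x : ℝ}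
    (hf : HasDerivAt f f' x) :
    HasDerivAt (fun s => (f s).trace) f'.trace x :=
  (traceLinearMap m ℝ 𝕜).toContinuousLinearMap.hasFDerivAt.comp_hasDerivAt x hf

theorem HasDerivAt.matrix_inv [DecidableEq m] {f : ℝ → Matrix m m 𝕜} {f' : Matrix m m 𝕜}
    {x : ℝ} (hf : HasDerivAt f f' x) (hx : IsUnit (f x)) :
    HasDerivAt (fun s => (f s)⁻¹) (-((f x)⁻¹ * f' * (f x)⁻¹)) x := by
  have h := (hx.unit_spec ▸ hasFDerivAt_ringInverse (𝕜 := ℝ) hx.unit).comp_hasDerivAt x hf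
  simp only [← Ring.inverse_unit, IsUnit.unit_spec, Function.comp_def,
    ← nonsing_inv_eq_ringInverse] at h
  exact h

variable {E : Type*} [NormedAddCommGroup E] [NormedSpace ℝ E] {k : WithTop ℕ∞}
  {F : E → Matrix m m 𝕜}

theorem contDiff_of_contDiff_entries [DecidableEq m]
    (hF : ∀ i j, ContDiff ℝ k fun q => F q i j) : ContDiff ℝ k F := by
  have hsum : F = fun q => ∑ i, ∑ j, F q i j • single i j (1 : 𝕜) := by
    ext1 q
    simp only [smul_single, smul_eq_mul, mul_one]
    exact matrix_eq_sum_single (F q)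
  rw [hsum]
  exact ContDiff.sum fun i _ => ContDiff.sum fun j _ => (hF i j).smul contDiff_const

theorem ContDiff.matrix_inv [DecidableEq m] (hF : ContDiff ℝ k F) (hU : ∀ q, IsUnit (F q)) :
    ContDiff ℝ k fun q => (F q)⁻¹ := by
  simp only [nonsing_inv_eq_ringInverse]
  refine contDiff_iff_contDiffAt.2 fun q => ?_
  have hinv := contDiffAt_ringInverse ℝ (n := k) (hU q).unit
  rw [IsUnit.unit_spec] at hinv
  exact hinv.comp q hF.contDiffAt

end MatrixCalculus

section LightCone

variable {n : ℕ} {F : ℝ × ℝ → Matrix (Fin n) (Fin n) ℂ} {q : ℝ × ℝ}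

theorem dplus_eq_of_hasDerivAt_s8 {F' : Matrix (Fin n) (Fin n) ℂ}
    (hF : HasDerivAt (fun s => F (s, q.2)) F' q.1) : dplus F q = F' := by
  ext i j
  exact (hF.matrix_apply i j).deriv

theorem dminus_eq_of_hasDerivAt_s8 {F' : Matrix (Fin n) (Fin n) ℂ}
    (hF : HasDerivAt (fun s => F (q.1, s)) F' q.2) : dminus F q = F' := by
  ext i j
  exact (hF.matrix_apply i j).deriv

theorem dplus_eq_fderiv (hF : DifferentiableAt ℝ F q) : dplus F q = fderiv ℝ F q (1, 0) :=
  dplus_eq_of_hasDerivAt_s8 hF.hasFDerivAt.hasDerivAt_fst_slice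

theorem dminus_eq_fderiv (hF : DifferentiableAt ℝ F q) : dminus F q = fderiv ℝ F q (0, 1) :=
  dminus_eq_of_hasDerivAt_s8 hF.hasFDerivAt.hasDerivAt_snd_slice

theorem DifferentiableAt.hasDerivAt_dplus (hF : DifferentiableAt ℝ F q) :
    HasDerivAt (fun s => F (s, q.2)) (dplus F q) q.1 :=
  dplus_eq_fderiv hF ▸ hF.hasFDerivAt.hasDerivAt_fst_slice

theorem DifferentiableAt.hasDerivAt_dminus (hF : DifferentiableAt ℝ F q) :
    HasDerivAt (fun s => F (q.1, s)) (dminus F q) q.2 :=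
  dminus_eq_fderiv hF ▸ hF.hasFDerivAt.hasDerivAt_snd_slice

theorem ContDiff.dplus {k l : WithTop ℕ∞} (hF : ContDiff ℝ k F) (hlk : l + 1 ≤ k) :
    ContDiff ℝ l (_root_.dplus F) := by
  have hF' : Differentiable ℝ F := (hF.of_le hlk).differentiable (by simp)
  rw [show _root_.dplus F = _ from funext fun q => dplus_eq_fderiv (hF' q)]
  exact (hF.fderiv_right hlk).clm_apply contDiff_const

theorem dminus_dplus_comm (hF : ContDiff ℝ 2 F) (q : ℝ × ℝ) :
    dminus (dplus F) q = dplus (dminus F) q := by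
  have hF' : Differentiable ℝ F := hF.differentiable two_ne_zero
  have hF'' : HasFDerivAt (fderiv ℝ F) (fderiv ℝ (fderiv ℝ F) q) q :=
    ((hF.fderiv_right (m := 1) le_rfl).differentiable one_ne_zero q).hasFDerivAt
  have hdir (v : ℝ × ℝ) :=
    (ContinuousLinearMap.apply ℝ (Matrix (Fin n) (Fin n) ℂ) v).hasFDerivAt.comp q hF''
  rw [show dplus F = _ from funext fun r => dplus_eq_fderiv (hF' r),
    show dminus F = _ from funext fun r => dminus_eq_fderiv (hF' r),
    dminus_eq_of_hasDerivAt_s8 (F := fun r => fderiv ℝ F r (1, 0)) (hdir _).hasDerivAt_snd_slice,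
    dplus_eq_of_hasDerivAt_s8 (F := fun r => fderiv ℝ F r (0, 1)) (hdir _).hasDerivAt_fst_slice]
  exact hF.contDiffAt.isSymmSndFDerivAt (by simp) (0, 1) (1, 0)

theorem dplus_conj (hF : DifferentiableAt ℝ F q) (hU : IsUnit (F q))
    (X : Matrix (Fin n) (Fin n) ℂ) :
    dplus (fun r => (F r)⁻¹ * X * F r) q
      = (F q)⁻¹ * X * F q * ((F q)⁻¹ * dplus F q)
        - (F q)⁻¹ * dplus F q * ((F q)⁻¹ * X * F q) := by
  have hF' := hF.hasDerivAt_dplus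
  rw [dplus_eq_of_hasDerivAt_s8 (((hF'.matrix_inv hU).mul_const X).mul hF')]
  have hFF : F q * (F q)⁻¹ = 1 := mul_nonsing_inv _ ((isUnit_iff_isUnit_det _).1 hU)
  simp only [mul_assoc, ← mul_assoc (F q) (F q)⁻¹, hFF, one_mul, neg_mul]
  abel

end LightCone

theorem statement8_general {n : ℕ}
    (h : ℝ × ℝ → Matrix (Fin n) (Fin n) ℂ)
    (Xp Xm D : Matrix (Fin n) (Fin n) ℂ)
    (hD : D * Xp - Xp * D = Xp)
    (hC3 : ∀ i j, ContDiff ℝ 3 fun p : ℝ × ℝ => h p i j)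
    (hinv : ∀ p, IsUnit (h p))
    (htoda : ∀ p : ℝ × ℝ,
      dminus (fun q => (h q)⁻¹ * dplus h q) p
        = Xp * ((h p)⁻¹ * Xm * h p) - (h p)⁻¹ * Xm * h p * Xp)
    (Θ : ℝ × ℝ → ℂ)
    (hΘ : ∀ p : ℝ × ℝ,
      Θ p = Matrix.trace (((h p)⁻¹ * dplus h p) * ((h p)⁻¹ * dplus h p))
        - 2 * Matrix.trace (D * dplus (fun q => (h q)⁻¹ * dplus h q) p)) :
    ∀ p : ℝ × ℝ, deriv (fun s => Θ (p.1, s)) p.2 = 0 := by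
  intro p
  set A := fun q => (h q)⁻¹ * dplus h q
  set M := fun q => (h q)⁻¹ * Xm * h q
  have hh : ContDiff ℝ 3 h := contDiff_of_contDiff_entries hC3
  have hA : ContDiff ℝ 2 A := ((hh.matrix_inv hinv).of_le (by norm_num)).mul (hh.dplus le_rfl)
  have hM : DifferentiableAt ℝ M p :=
    (((hh.matrix_inv hinv).mul contDiff_const).mul hh).differentiable (by norm_num) p
  have hΘ' : HasDerivAt (fun s => Θ (p.1, s))
      (trace (dminus A p * A p + A p * dminus A p) - 2 * trace (D * dminus (dplus A) p)) p.2 := by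
    have hA' := (hA.differentiable two_ne_zero p).hasDerivAt_dminus
    have hdA' := ((hA.dplus le_rfl).differentiable one_ne_zero p).hasDerivAt_dminus
    simp only [hΘ]
    exact (hA'.mul hA').trace.sub ((hdA'.const_mul D).trace.const_mul 2)
  have hdplus_bracket : dplus (fun q => Xp * M q - M q * Xp) p = Xp * dplus M p - dplus M p * Xp :=
    dplus_eq_of_hasDerivAt_s8
      ((hM.hasDerivAt_dplus.const_mul Xp).sub (hM.hasDerivAt_dplus.mul_const Xp))
  rw [hΘ'.deriv, htoda p, dminus_dplus_comm hA, funext htoda, hdplus_bracket,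
    dplus_conj (hh.differentiable (by norm_num) p) (hinv p)]
  exact trace_toda_identity _ _ _ _ hD

/-- If `[D, X₊] = X₊` and `h` (three times continuously differentiable) satisfies
the Toda equation, then `Θ₊₊ = Tr((h⁻¹∂₊h)²) − 2Tr(D ∂₊(h⁻¹∂₊h))` is chiral:
`∂₋Θ₊₊ = 0`. -/
theorem statement8 {n : ℕ} (hn : 0 < n)
    (h : ℝ × ℝ → Matrix (Fin n) (Fin n) ℂ)
    (Xp Xm D : Matrix (Fin n) (Fin n) ℂ)
    (hD : D * Xp - Xp * D = Xp)
    (hC3 : ∀ i j, ContDiff ℝ 3 fun p : ℝ × ℝ => h p i j)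
    (hinv : ∀ p, IsUnit (h p))
    (htoda : ∀ p : ℝ × ℝ,
      dminus (fun q => (h q)⁻¹ * dplus h q) p
        = Xp * ((h p)⁻¹ * Xm * h p) - (h p)⁻¹ * Xm * h p * Xp)
    (Θ : ℝ × ℝ → ℂ)
    (hΘ : ∀ p : ℝ × ℝ,
      Θ p = Matrix.trace (((h p)⁻¹ * dplus h p) * ((h p)⁻¹ * dplus h p))
        - 2 * Matrix.trace (D * dplus (fun q => (h q)⁻¹ * dplus h q) p)) :
    ∀ p : ℝ × ℝ, deriv (fun s => Θ (p.1, s)) p.2 = 0 :=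
  statement8_general h Xp Xm D hD hC3 hinv htoda Θ hΘ
end
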